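/- arXiv:1705.06706 — 5 statements merged into one kernel-verified Lean document; each statement's English description precedes it below -/
import Mathlib

section
/- Let F: ℝ⁵ → ℝ⁵ be the drift of the full slow-fast Stommel model, F(x,y,v,T,S) = (-(x-1)/ε_T - (1+P_a(x-y)²)x + 4vT, 1 - (1+P_a(x-y)²)y + 4vS, -v/ε, -(T + 2P²vx)/ε, -(S + 2P²vy)/ε), with ε_T, ε, P_a, P > 0. Then with the inner-product norm ‖u‖² = x² + y² + εv² + (2ε/P²)(T² + S²) there exist constants α, β > 0 such that ⟨u, F(u)⟩ ≤ α - β‖u‖² for all u ∈ ℝ⁵. -/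
/-!
The two coupling terms `4vT·x + 4vS·y` of the slow equations cancel exactly against the
terms `-(2/P²)·2P²vx·T` and `-(2/P²)·2P²vy·S` coming from the fast equations, so
`⟨u, F(u)⟩` is a sum of one-variable quadratics plus the nonpositive term
`-P_a(x-y)²(x²+y²)`. Completing squares in `x` and `y` then bounds it by a constant minus
`(x² + y²)/2 + v² + (2/P²)(T² + S²)`, which dominates `min (1/2) (1/ε)` times the norm.
-/

theorem stommel_inner_drift_eq {εT ε Pa P : ℝ} (hε : ε ≠ 0) (hP : P ≠ 0) (x y v T S : ℝ) :
    x * (-(x-1)/εT - (1 + Pa*(x-y)^2)*x + 4*v*T)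
      + y * (1 - (1 + Pa*(x-y)^2)*y + 4*v*S)
      + ε * v * (-v/ε)
      + (2*ε/P^2) * (T * (-(T + 2*P^2*v*x)/ε) + S * (-(S + 2*P^2*v*y)/ε))
      = (x - x^2)/εT + y - (1 + Pa*(x-y)^2)*(x^2 + y^2) - (v^2 + (2/P^2)*(T^2 + S^2)) := by
  field_simp
  ring

theorem min_mul_add_le_mul_add_mul {α : Type*} [Semiring α] [LinearOrder α]
    [IsOrderedRing α] {a b p q : α} (hp : 0 ≤ p) (hq : 0 ≤ q) :
    min a b * (p + q) ≤ a * p + b * q := by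
  rw [mul_add]
  gcongr
  exacts [min_le_left a b, min_le_right a b]

/-- Dissipativity of the drift of the full slow-fast Stommel model:
with the inner-product norm `‖u‖² = x² + y² + εv² + (2ε/P²)(T² + S²)` there
exist `α, β > 0` with `⟨u, F(u)⟩ ≤ α - β‖u‖²` for all `u ∈ ℝ⁵`. -/
theorem stmt_5 (εT ε Pa P : ℝ) (hεT : 0 < εT) (hε : 0 < ε) (hPa : 0 < Pa) (hP : 0 < P) :
    ∃ α β : ℝ, 0 < α ∧ 0 < β ∧ ∀ x y v T S : ℝ,
      x * (-(x-1)/εT - (1 + Pa*(x-y)^2)*x + 4*v*T)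
      + y * (1 - (1 + Pa*(x-y)^2)*y + 4*v*S)
      + ε * v * (-v/ε)
      + (2*ε/P^2) * (T * (-(T + 2*P^2*v*x)/ε) + S * (-(S + 2*P^2*v*y)/ε))
      ≤ α - β * (x^2 + y^2 + ε*v^2 + (2*ε/P^2)*(T^2 + S^2)) := by
  refine ⟨1/(4*εT) + 1/2, min (1/2) (1/ε), by positivity, by positivity, fun x y v T S => ?_⟩
  rw [stommel_inner_drift_eq hε.ne' hP.ne']
  have hx : (x - x^2)/εT ≤ 1/(4*εT) := by
    rw [div_le_div_iff₀ hεT (by positivity)]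
    nlinarith [sq_nonneg (2*x - 1)]
  have hy : y ≤ 1/2 + y^2/2 := by nlinarith [sq_nonneg (y - 1)]
  have hcoupling : x^2 + y^2 ≤ (1 + Pa*(x-y)^2)*(x^2 + y^2) :=
    le_mul_of_one_le_left (by positivity) (le_add_of_nonneg_right (by positivity))
  have hfast : (1/ε)*(ε*v^2 + (2*ε/P^2)*(T^2 + S^2)) = v^2 + (2/P^2)*(T^2 + S^2) := by
    field_simp
  have hnorm := min_mul_add_le_mul_add_mul (a := 1/2) (b := 1/ε)
    (by positivity : 0 ≤ x^2 + y^2) (by positivity : 0 ≤ ε*v^2 + (2*ε/P^2)*(T^2 + S^2))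
  rw [hfast] at hnorm
  linear_combination hx + hy + hcoupling + hnorm + sq_nonneg x / 2
end

section
/- Let F: ℝ⁵ → ℝ⁵ be the drift of the Stommel model without mean diffusion, F(x,y,v,T,S) = (-(x-1)/ε_T - P_a(x-y)²x + 4vT, 1 - P_a(x-y)²y + 4vS, -v/ε, -(T + 2P²vx)/ε, -(S + 2P²vy)/ε). Then with the norm ‖u‖² = x² + y² + εv² + (2ε/P²)(T²+S²), there exist α, β > 0 such that ⟨u, F(u)⟩ ≤ α - β‖u‖² for all u ∈ ℝ⁵. -/
/-- 2D key estimate: the relaxation in `x` plus the quartic term control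
`β (x² + y²)` up to a constant, provided `6 β ≤ t = 1/εT`. -/
lemma stmt_6_key (t Pa β x y : ℝ) (hPa : 0 < Pa) (hβ : 0 < β) (h6 : 6*β ≤ t) :
    x*t - x^2*t + y - Pa*(x-y)^2*(x^2+y^2) + β*(x^2+y^2)
      ≤ t^2/(4*β) + 1/(4*β) + 8*β^2/Pa := by
  have hx : x*t ≤ β*x^2 + t^2/(4*β) := by
    rw [← sub_nonneg]
    have h : β*x^2 + t^2/(4*β) - x*t = (2*β*x - t)^2/(4*β) := by
      field_simp; ring
    rw [h]; positivity
  have hy : y ≤ β*y^2 + 1/(4*β) := by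
    rw [← sub_nonneg]
    have h : β*y^2 + 1/(4*β) - y = (2*β*y - 1)^2/(4*β) := by
      field_simp; ring
    rw [h]; positivity
  have hlast : 4*β*(x-y)^2 - Pa*(x-y)^2*(x^2+y^2) ≤ 8*β^2/Pa := by
    rw [← sub_nonneg]
    have h : 8*β^2/Pa - (4*β*(x-y)^2 - Pa*(x-y)^2*(x^2+y^2))
        = ((Pa*(x-y)^2 - 4*β)^2/2 + Pa^2*(x-y)^2*(x+y)^2/2)/Pa := by
      field_simp; ring
    rw [h]; positivity
  have hy2 : y^2 ≤ 2*x^2 + 2*(x-y)^2 := by nlinarith [sq_nonneg (2*x - y)]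
  have hβy2 : β*(y^2) ≤ β*(2*x^2 + 2*(x-y)^2) :=
    mul_le_mul_of_nonneg_left hy2 hβ.le
  have h6x : 6*β*x^2 ≤ t*x^2 := mul_le_mul_of_nonneg_right h6 (sq_nonneg x)
  nlinarith [hx, hy, hlast, hβy2, h6x]

/-- Dissipativity of the drift of the Stommel model without mean diffusion:
with the inner-product norm `‖u‖² = x² + y² + εv² + (2ε/P²)(T² + S²)` there
exist `α, β > 0` with `⟨u, F(u)⟩ ≤ α - β‖u‖²` for all `u ∈ ℝ⁵`. -/
theorem stmt_6 (εT ε Pa P : ℝ) (hεT : 0 < εT) (hε : 0 < ε) (hPa : 0 < Pa) (hP : 0 < P) :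
    ∃ α β : ℝ, 0 < α ∧ 0 < β ∧ ∀ x y v T S : ℝ,
      x * (-(x-1)/εT - (Pa*(x-y)^2)*x + 4*v*T)
      + y * (1 - (Pa*(x-y)^2)*y + 4*v*S)
      + ε * v * (-v/ε)
      + (2*ε/P^2) * (T * (-(T + 2*P^2*v*x)/ε) + S * (-(S + 2*P^2*v*y)/ε))
      ≤ α - β * (x^2 + y^2 + ε*v^2 + (2*ε/P^2)*(T^2 + S^2)) := by
  set β : ℝ := 1/(ε + 18*εT) with hβdef
  have hden : 0 < ε + 18*εT := by linarith
  have hβ : 0 < β := by positivity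
  set t : ℝ := 1/εT with htdef
  have ht : 0 < t := by positivity
  refine ⟨t^2/(4*β) + 1/(4*β) + 8*β^2/Pa + 1, β, by positivity, hβ, ?_⟩
  intro x y v T S
  have hβε : β*ε ≤ 1 := by
    rw [hβdef, div_mul_eq_mul_div, div_le_one hden]; linarith
  have h6 : 6*β ≤ t := by
    rw [hβdef, htdef, mul_one_div, div_le_div_iff₀ hden hεT]; nlinarith
  have key := stmt_6_key t Pa β x y hPa hβ h6
  have hE : x * (-(x-1)/εT - (Pa*(x-y)^2)*x + 4*v*T)
      + y * (1 - (Pa*(x-y)^2)*y + 4*v*S)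
      + ε * v * (-v/ε)
      + (2*ε/P^2) * (T * (-(T + 2*P^2*v*x)/ε) + S * (-(S + 2*P^2*v*y)/ε))
      = x*t - x^2*t + y - Pa*(x-y)^2*(x^2+y^2) - v^2 - (2/P^2)*(T^2+S^2) := by
    rw [htdef]; field_simp; ring
  rw [hE]
  have hv : β*(ε*v^2) ≤ v^2 := by
    calc β*(ε*v^2) = (β*ε)*v^2 := by ring
    _ ≤ 1*v^2 := mul_le_mul_of_nonneg_right hβε (sq_nonneg v)
    _ = v^2 := by ring
  have hTSpos : (0:ℝ) ≤ (2/P^2)*(T^2+S^2) := by positivity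
  have hTS : β*((2*ε/P^2)*(T^2+S^2)) ≤ (2/P^2)*(T^2+S^2) := by
    calc β*((2*ε/P^2)*(T^2+S^2)) = (β*ε)*((2/P^2)*(T^2+S^2)) := by ring
    _ ≤ 1*((2/P^2)*(T^2+S^2)) := mul_le_mul_of_nonneg_right hβε hTSpos
    _ = (2/P^2)*(T^2+S^2) := by ring
  nlinarith [key, hv, hTS]
end

section
/- For any ε_T > 0 and P_a > 0 and any 0 < β < 1/(2ε_T), there exists α > 0 such that for all x, y ∈ ℝ: y - x(x-1)/ε_T - P_a(x-y)²(x²+y²) + β(x²+y²) ≤ α. -/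
set_option maxHeartbeats 1000000


/-- For any `εT > 0`, `Pa > 0` and any `0 < β < 1/(2εT)` there exists `α > 0`
such that `y - x(x-1)/εT - Pa(x-y)²(x²+y²) + β(x²+y²) ≤ α` for all `x, y`. -/
theorem stmt_7 (εT Pa β : ℝ) (hεT : 0 < εT) (hPa : 0 < Pa)
    (hβ0 : 0 < β) (hβ : β < 1/(2*εT)) :
    ∃ α : ℝ, 0 < α ∧ ∀ x y : ℝ,
      y - x*(x-1)/εT - Pa*(x-y)^2*(x^2+y^2) + β*(x^2+y^2) ≤ α := by
  have hβ' : β * (2*εT) < 1 := (lt_div_iff₀ (by positivity)).mp hβ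
  obtain ⟨e, he⟩ : ∃ e : ℝ, e = 1/εT := ⟨_, rfl⟩
  have he0 : 0 < e := by rw [he]; positivity
  have h2β : 2*β < e := by
    rw [he, lt_div_iff₀ hεT]; nlinarith
  obtain ⟨δ, hδdef⟩ : ∃ δ : ℝ, δ = e - 2*β := ⟨_, rfl⟩
  have hδ : 0 < δ := by rw [hδdef]; linarith
  obtain ⟨C, hC⟩ : ∃ C : ℝ, C = β + 2*β^2/δ + 1 := ⟨_, rfl⟩
  have hC0 : 0 < C := by rw [hC]; positivity
  refine ⟨1 + (1+e)^2/δ + C^2/(2*Pa), by positivity, fun x y => ?_⟩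
  have hdiv : x*(x-1)/εT = x*(x-1)*e := by rw [he]; ring
  rw [hdiv]
  have hmain : 4*δ*Pa*((1 + (1+e)^2/δ + C^2/(2*Pa))
        - (y - x*(x-1)*e - Pa*(x-y)^2*(x^2+y^2) + β*(x^2+y^2))) =
      2*δ*Pa^2*((x-y)^2*(x+y)^2) + Pa*(δ*x-2*(1+e))^2 + 4*δ*Pa*((x-y)+1/2)^2
      + 2*Pa*(δ*x+2*β*(x-y))^2 + 2*δ*(Pa*(x-y)^2-C)^2 + δ^2*Pa*x^2 + 3*δ*Pa := by
    have hne : e - 2*β ≠ 0 := ne_of_gt (by linarith)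
    rw [hC, hδdef]
    field_simp
    ring
  have n1 : 0 ≤ 2*δ*Pa^2*((x-y)^2*(x+y)^2) := by
    apply mul_nonneg (by positivity) (by positivity)
  have n2 : 0 ≤ Pa*(δ*x-2*(1+e))^2 := by positivity
  have n3 : 0 ≤ 4*δ*Pa*((x-y)+1/2)^2 := by positivity
  have n4 : 0 ≤ 2*Pa*(δ*x+2*β*(x-y))^2 := by positivity
  have n5 : 0 ≤ 2*δ*(Pa*(x-y)^2-C)^2 := by positivity
  have n6 : 0 ≤ δ^2*Pa*x^2 := by positivity
  have n7 : 0 ≤ 3*δ*Pa := by positivity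
  have hR : 0 ≤ 4*δ*Pa*((1 + (1+e)^2/δ + C^2/(2*Pa))
        - (y - x*(x-1)*e - Pa*(x-y)^2*(x^2+y^2) + β*(x^2+y^2))) := by
    rw [hmain]; linarith
  nlinarith [hR, mul_pos (mul_pos (by linarith : (0:ℝ) < 4*δ) hPa) hC0]
end

section
/- Let F: ℝ⁵ → ℝ⁵ be the drift of the full model and let ρ₁, ρ₂, ρ₃ be the (constant) columns of the diffusion matrix, which are nonzero multiples of the first three standard basis vectors e₁, e₂, e₃ in ℝ⁵. Then the iterated Lie brackets [[F, ρ₁], ρ₃] and [[F, ρ₂], ρ₃] are nonzero constant multiples of e₄ and e₅ respectively, so that {ρ₁, ρ₂, ρ₃, [[F,ρ₁],ρ₃], [[F,ρ₂],ρ₃]} spans ℝ⁵. -/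
/-! The brackets are the mixed second partial derivatives `∂ᵥ∂ₓF` and `∂ᵥ∂ᵧF` of the polynomial
drift, computed by restricting `F` to planes `(s, t) ↦ u + s • ρ₃ + t • ρ` and differentiating in
one variable at a time. The only monomials of `F` involving both `v` and `x` (resp. `v` and `y`)
are `-2P²vx/ε` in the `T`-component (resp. `-2P²vy/ε` in the `S`-component). Since `P, ε ≠ 0`,
the five vectors are then nonzero multiples of the standard basis. -/

section LineDerivative

variable {E : Type*} [NormedAddCommGroup E] [NormedSpace ℝ E] {ι : Type*} [Fintype ι]

theorem fderiv_apply_apply_eq_deriv {f : E → ι → ℝ} {u : E} (hf : DifferentiableAt ℝ f u)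
    (v : E) (i : ι) : fderiv ℝ f u v i = deriv (fun t : ℝ => f (u + t • v) i) 0 := by
  have hline : DifferentiableAt ℝ (fun t : ℝ => f (u + t • v)) 0 :=
    DifferentiableAt.comp (f := fun t : ℝ => u + t • v) _ (by simpa using hf) (by fun_prop)
  rw [← hf.lineDeriv_eq_fderiv, lineDeriv, deriv_pi (fun j => differentiableAt_pi.1 hline j)]

theorem fderiv_fderiv_apply_apply_eq_deriv_deriv {f : E → ι → ℝ} (hf : ContDiff ℝ 2 f)
    (u v w : E) (i : ι) :
    fderiv ℝ (fun x => fderiv ℝ f x v) u w i =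
      deriv (fun s : ℝ => deriv (fun t : ℝ => f (u + s • w + t • v) i) 0) 0 := by
  have hdf : Differentiable ℝ (fun x => fderiv ℝ f x v) := fun x =>
    ((hf.fderiv_right (m := 1) le_rfl).differentiable one_ne_zero x).clm_apply
      (differentiableAt_const v)
  rw [fderiv_apply_apply_eq_deriv (hdf u)]
  congr 1
  funext s
  rw [fderiv_apply_apply_eq_deriv (hf.differentiable two_ne_zero _)]

end LineDerivative

theorem Submodule.span_eq_top_of_forall_exists_smul_single_mem {K ι : Type*} [Field K]
    [Finite ι] [DecidableEq ι] {S : Set (ι → K)} (h : ∀ i, ∃ c ≠ (0 : K), c • Pi.single i 1 ∈ S) :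
    Submodule.span K S = ⊤ := by
  rw [eq_top_iff, ← (Pi.basisFun K ι).span_eq, Submodule.span_le]
  rintro _ ⟨i, rfl⟩
  obtain ⟨c, hc, hmem⟩ := h i
  simpa [smul_smul, hc] using Submodule.smul_mem (Submodule.span K S) c⁻¹
    (Submodule.subset_span hmem)

theorem stmt_11_general (εT ε Pa P : ℝ) (hε : 0 < ε) (hP : 0 < P)
    (F : (Fin 5 → ℝ) → (Fin 5 → ℝ))
    (hF : ∀ u : Fin 5 → ℝ, F u =
      ![-(u 0 - 1)/εT - (1 + Pa*(u 0 - u 1)^2)*(u 0) + 4*(u 2)*(u 3),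
        1 - (1 + Pa*(u 0 - u 1)^2)*(u 1) + 4*(u 2)*(u 4),
        -(u 2)/ε,
        -((u 3) + 2*P^2*(u 2)*(u 0))/ε,
        -((u 4) + 2*P^2*(u 2)*(u 1))/ε])
    (c₁ c₂ c₃ : ℝ) (hc₁ : c₁ ≠ 0) (hc₂ : c₂ ≠ 0) (hc₃ : c₃ ≠ 0)
    (ρ₁ ρ₂ ρ₃ : Fin 5 → ℝ)
    (hρ₁ : ρ₁ = c₁ • (Pi.single 0 1 : Fin 5 → ℝ))
    (hρ₂ : ρ₂ = c₂ • (Pi.single 1 1 : Fin 5 → ℝ))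
    (hρ₃ : ρ₃ = c₃ • (Pi.single 2 1 : Fin 5 → ℝ)) :
    (∀ u : Fin 5 → ℝ,
      fderiv ℝ (fun w => fderiv ℝ F w ρ₁) u ρ₃ =
        (c₁ * c₃ * (-2*P^2/ε)) • (Pi.single 3 1 : Fin 5 → ℝ)) ∧
    (∀ u : Fin 5 → ℝ,
      fderiv ℝ (fun w => fderiv ℝ F w ρ₂) u ρ₃ =
        (c₂ * c₃ * (-2*P^2/ε)) • (Pi.single 4 1 : Fin 5 → ℝ)) ∧
    Submodule.span ℝ {ρ₁, ρ₂, ρ₃,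
      (c₁ * c₃ * (-2*P^2/ε)) • (Pi.single 3 1 : Fin 5 → ℝ),
      (c₂ * c₃ * (-2*P^2/ε)) • (Pi.single 4 1 : Fin 5 → ℝ)} = ⊤ := by
  have hFsmooth : ContDiff ℝ 2 F := by
    rw [funext hF, contDiff_pi]
    intro i
    fin_cases i <;> simp only [Fin.reduceFinMk, Matrix.cons_val] <;> fun_prop
  have hκ : -2 * P ^ 2 / ε ≠ 0 :=
    div_ne_zero (mul_ne_zero (by norm_num) (pow_ne_zero 2 hP.ne')) hε.ne'
  refine ⟨fun u => ?_, fun u => ?_, ?_⟩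
  · ext i
    rw [fderiv_fderiv_apply_apply_eq_deriv_deriv hFsmooth]
    fin_cases i <;> simp (disch := fun_prop) [hF, hρ₁, hρ₃, Pi.single_apply]
    ring
  · ext i
    rw [fderiv_fderiv_apply_apply_eq_deriv_deriv hFsmooth]
    fin_cases i <;> simp (disch := fun_prop) [hF, hρ₂, hρ₃, Pi.single_apply]
    ring
  · refine Submodule.span_eq_top_of_forall_exists_smul_single_mem fun i => ?_
    fin_cases i
    exacts [⟨c₁, hc₁, by simp [hρ₁]⟩, ⟨c₂, hc₂, by simp [hρ₂]⟩, ⟨c₃, hc₃, by simp [hρ₃]⟩,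
      ⟨_, mul_ne_zero (mul_ne_zero hc₁ hc₃) hκ, by simp⟩,
      ⟨_, mul_ne_zero (mul_ne_zero hc₂ hc₃) hκ, by simp⟩]

/-- For the full Stommel drift `F : ℝ⁵ → ℝ⁵` and constant vector fields
`ρ₁, ρ₂, ρ₃` that are nonzero multiples of `e₁, e₂, e₃`, the iterated Lie
brackets `[[F,ρ₁],ρ₃]` and `[[F,ρ₂],ρ₃]` (second directional derivatives of
`F`) are nonzero constant multiples of `e₄` and `e₅` respectively, so that
`{ρ₁, ρ₂, ρ₃, [[F,ρ₁],ρ₃], [[F,ρ₂],ρ₃]}` spans `ℝ⁵`. -/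
theorem stmt_11 (εT ε Pa P : ℝ) (hεT : 0 < εT) (hε : 0 < ε) (hPa : 0 < Pa) (hP : 0 < P)
    (F : (Fin 5 → ℝ) → (Fin 5 → ℝ))
    (hF : ∀ u : Fin 5 → ℝ, F u =
      ![-(u 0 - 1)/εT - (1 + Pa*(u 0 - u 1)^2)*(u 0) + 4*(u 2)*(u 3),
        1 - (1 + Pa*(u 0 - u 1)^2)*(u 1) + 4*(u 2)*(u 4),
        -(u 2)/ε,
        -((u 3) + 2*P^2*(u 2)*(u 0))/ε,
        -((u 4) + 2*P^2*(u 2)*(u 1))/ε])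
    (c₁ c₂ c₃ : ℝ) (hc₁ : c₁ ≠ 0) (hc₂ : c₂ ≠ 0) (hc₃ : c₃ ≠ 0)
    (ρ₁ ρ₂ ρ₃ : Fin 5 → ℝ)
    (hρ₁ : ρ₁ = c₁ • (Pi.single 0 1 : Fin 5 → ℝ))
    (hρ₂ : ρ₂ = c₂ • (Pi.single 1 1 : Fin 5 → ℝ))
    (hρ₃ : ρ₃ = c₃ • (Pi.single 2 1 : Fin 5 → ℝ)) :
    (∀ u : Fin 5 → ℝ,
      fderiv ℝ (fun w => fderiv ℝ F w ρ₁) u ρ₃ =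
        (c₁ * c₃ * (-2*P^2/ε)) • (Pi.single 3 1 : Fin 5 → ℝ)) ∧
    (∀ u : Fin 5 → ℝ,
      fderiv ℝ (fun w => fderiv ℝ F w ρ₂) u ρ₃ =
        (c₂ * c₃ * (-2*P^2/ε)) • (Pi.single 4 1 : Fin 5 → ℝ)) ∧
    Submodule.span ℝ {ρ₁, ρ₂, ρ₃,
      (c₁ * c₃ * (-2*P^2/ε)) • (Pi.single 3 1 : Fin 5 → ℝ),
      (c₂ * c₃ * (-2*P^2/ε)) • (Pi.single 4 1 : Fin 5 → ℝ)} = ⊤ :=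
  stmt_11_general εT ε Pa P hε hP F hF c₁ c₂ c₃ hc₁ hc₂ hc₃ ρ₁ ρ₂ ρ₃ hρ₁ hρ₂ hρ₃
end

section
/- For the Ornstein–Uhlenbeck-type fast system Y' = MY + G Ẇ with M = -(1/ε)[[1,0,0],[2P²x,1,0],[2P²y,0,1]] and G = √(2/ε) diag(1, σ, σ), the stationary covariance Σ solves the Lyapunov equation MΣ + ΣMᵀ + GGᵀ = 0, and its unique solution is Σ = [[1, -P²x, -P²y],[-P²x, 2P⁴x² + σ², 2P⁴xy],[-P²y, 2P⁴xy, 2P⁴y² + σ²]]. -/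
set_option maxHeartbeats 1000000 in
/-- For `M = -(1/ε)[[1,0,0],[2P²x,1,0],[2P²y,0,1]]` and
`G = √(2/ε)·diag(1,σ,σ)`, the stationary covariance
`Σ = [[1, -P²x, -P²y],[-P²x, 2P⁴x² + σ², 2P⁴xy],[-P²y, 2P⁴xy, 2P⁴y² + σ²]]`
is the unique solution of the Lyapunov equation `MΣ + ΣMᵀ + GGᵀ = 0`. -/
theorem stmt_14 (ε P σ x y : ℝ) (hε : 0 < ε) (hP : 0 < P) (hσ : 0 ≤ σ)
    (M G S1 : Matrix (Fin 3) (Fin 3) ℝ)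
    (hM : M = (-(1/ε)) • !![1, 0, 0; 2*P^2*x, 1, 0; 2*P^2*y, 0, 1])
    (hG : G = Real.sqrt (2/ε) • !![1, 0, 0; 0, σ, 0; 0, 0, σ])
    (hS1 : S1 = !![1, -P^2*x, -P^2*y;
                  -P^2*x, 2*P^4*x^2 + σ^2, 2*P^4*x*y;
                  -P^2*y, 2*P^4*x*y, 2*P^4*y^2 + σ^2]) :
    M * S1 + S1 * M.transpose + G * G.transpose = 0 ∧
    (∀ S2 : Matrix (Fin 3) (Fin 3) ℝ,
      M * S2 + S2 * M.transpose + G * G.transpose = 0 → S2 = S1) := by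
  have hε' : ε ≠ 0 := ne_of_gt hε
  have h2 : Real.sqrt (2/ε) * Real.sqrt (2/ε) = 2/ε := Real.mul_self_sqrt (by positivity)
  set s := Real.sqrt (2/ε) with hs
  have h2' : s * s * ε = 2 := by rw [h2]; field_simp
  have h3 : s * σ * (s * σ) * ε = 2 * σ^2 := by linear_combination (σ^2) * h2'
  have hM' : M = !![-(1/ε), 0, 0; -(1/ε)*(2*P^2*x), -(1/ε), 0; -(1/ε)*(2*P^2*y), 0, -(1/ε)] := by
    rw [hM]; ext i j; fin_cases i <;> fin_cases j <;>
      simp [Matrix.smul_apply, Matrix.vecHead, Matrix.vecTail]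
  have hMT : M.transpose
      = !![-(1/ε), -(1/ε)*(2*P^2*x), -(1/ε)*(2*P^2*y); 0, -(1/ε), 0; 0, 0, -(1/ε)] := by
    rw [hM']; ext i j; fin_cases i <;> fin_cases j <;>
      simp [Matrix.transpose_apply, Matrix.vecHead, Matrix.vecTail]
  have hG' : G = !![s, 0, 0; 0, s*σ, 0; 0, 0, s*σ] := by
    rw [hG]; ext i j; fin_cases i <;> fin_cases j <;>
      simp [Matrix.smul_apply, Matrix.vecHead, Matrix.vecTail]
  have hGT : G.transpose = !![s, 0, 0; 0, s*σ, 0; 0, 0, s*σ] := by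
    rw [hG']; ext i j; fin_cases i <;> fin_cases j <;>
      simp [Matrix.transpose_apply, Matrix.vecHead, Matrix.vecTail]
  have part1 : M * S1 + S1 * M.transpose + G * G.transpose = 0 := by
    rw [hMT, hGT, hM', hG', hS1]
    ext i j
    fin_cases i <;> fin_cases j <;>
      simp [Matrix.mul_apply, Fin.sum_univ_three, Matrix.vecHead, Matrix.vecTail] <;>
      field_simp <;> ring_nf <;>
      (try first
        | linarith [h2', h3]
        | nlinarith [h2', h3, sq_nonneg σ, sq_nonneg s])
  refine ⟨part1, fun S2 h => ?_⟩
  have hD : M * S2 + S2 * M.transpose = M * S1 + S1 * M.transpose := by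
    have h4 : M * S2 + S2 * M.transpose + G * G.transpose
        = M * S1 + S1 * M.transpose + G * G.transpose := by rw [h, part1]
    exact add_right_cancel h4
  set A : Matrix (Fin 3) (Fin 3) ℝ := !![1, 0, 0; 2*P^2*x, 1, 0; 2*P^2*y, 0, 1] with hA
  have hAM : A = (-ε) • M := by
    rw [hM']; ext i j; fin_cases i <;> fin_cases j <;>
      (simp [hA, Matrix.smul_apply, Matrix.vecHead, Matrix.vecTail]; try field_simp)
  have hD2 : A * S2 + S2 * A.transpose = A * S1 + S1 * A.transpose := by
    rw [hAM, Matrix.transpose_smul, Matrix.smul_mul, Matrix.mul_smul, ← smul_add, hD,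
      Matrix.smul_mul, Matrix.mul_smul, ← smul_add]
  rw [hA] at hD2
  have E00 := congrFun (congrFun hD2 0) 0
  have E01 := congrFun (congrFun hD2 0) 1
  have E02 := congrFun (congrFun hD2 0) 2
  have E10 := congrFun (congrFun hD2 1) 0
  have E11 := congrFun (congrFun hD2 1) 1
  have E12 := congrFun (congrFun hD2 1) 2
  have E20 := congrFun (congrFun hD2 2) 0
  have E21 := congrFun (congrFun hD2 2) 1
  have E22 := congrFun (congrFun hD2 2) 2
  simp only [hS1, Matrix.mul_apply, Fin.sum_univ_three, Matrix.add_apply, Matrix.transpose_apply,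
    Matrix.cons_val', Matrix.cons_val_zero, Matrix.cons_val_one, Matrix.head_cons,
    Matrix.empty_val', Matrix.cons_val_fin_one, Matrix.head_fin_const,
    Matrix.cons_val_two, Matrix.tail_cons] at E00 E01 E02 E10 E11 E12 E20 E21 E22
  norm_num [Matrix.vecHead, Matrix.vecTail] at E00 E01 E02 E10 E11 E12 E20 E21 E22
  simp only [Matrix.cons_val] at E00 E01 E02 E10 E11 E12 E20 E21 E22
  have t00 : S2 0 0 = 1 := by linear_combination (1/2) * E00
  have t01 : S2 0 1 = -P^2*x := by linear_combination (1/2) * E01 - (P^2*x) * t00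
  have t10 : S2 1 0 = -P^2*x := by linear_combination (1/2) * E10 - (P^2*x) * t00
  have t02 : S2 0 2 = -P^2*y := by linear_combination (1/2) * E02 - (P^2*y) * t00
  have t20 : S2 2 0 = -P^2*y := by linear_combination (1/2) * E20 - (P^2*y) * t00
  have t11 : S2 1 1 = 2*P^4*x^2 + σ^2 := by
    linear_combination (1/2) * E11 - (P^2*x) * t01 - (P^2*x) * t10
  have t12 : S2 1 2 = 2*P^4*x*y := by
    linear_combination (1/2) * E12 - (P^2*x) * t02 - (P^2*y) * t10
  have t21 : S2 2 1 = 2*P^4*x*y := by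
    linear_combination (1/2) * E21 - (P^2*y) * t01 - (P^2*x) * t20
  have t22 : S2 2 2 = 2*P^4*y^2 + σ^2 := by
    linear_combination (1/2) * E22 - (P^2*y) * t02 - (P^2*y) * t20
  rw [hS1]; ext i j
  fin_cases i <;> fin_cases j <;>
    simp [t00, t01, t02, t10, t11, t12, t20, t21, t22, Matrix.vecHead, Matrix.vecTail]
end
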